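/- arXiv:1804.01204 — 6 statements merged into one kernel-verified Lean document; each statement's English description precedes it below -/
import Mathlib

section
/- Let G be a finite group and H ⊆ G a subset with 1 ∉ H, H = H⁻¹, and H invariant under conjugation by G. Then the Cayley graph Cay(G,H) (with adjacency matrix A indexed by G, where A(u,v) = 1 iff v·u⁻¹ ∈ H) has singular adjacency matrix if and only if there exists an irreducible complex character χ of G with ∑_{h ∈ H} χ(h) = 0. -/
open CategoryTheory
open scoped MonoidAlgebra

/-!
The element `a = ∑_{h ∈ H} h` of `ℂ[G]` is central, and the adjacency matrix is the transpose of
the matrix of left multiplication by `a`, so the graph is singular iff `a` is not a unit.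
A central non-unit annihilates a simple quotient `ℂ[G] ⧸ m` (take `m ⊇ ℂ[G] a` maximal), while a
unit acts invertibly on every nonzero module. By Schur's lemma `a` acts on an irreducible `V` as the
scalar `(∑_{h ∈ H} χ_V(h)) / dim V`, so it annihilates `V` iff the character sum vanishes.
-/

theorem Algebra.isUnit_norm_iff {K S : Type*} [Field K] [Ring S] [Algebra K S]
    [FiniteDimensional K S] {x : S} : IsUnit (Algebra.norm K x) ↔ IsUnit x := by
  refine ⟨fun hx => ?_, fun hx => hx.map _⟩
  rw [Algebra.norm_apply, ← LinearMap.isUnit_iff_isUnit_det] at hx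
  obtain ⟨y, hy⟩ := ((Module.End.isUnit_iff _).mp hx).surjective 1
  have : IsArtinianRing S := IsArtinianRing.of_finite K S
  exact IsUnit.of_mul_eq_one y hy

theorem Submodule.exists_isCoatom_smul_quotient_eq_zero {A : Type*} [Ring A] {a : A}
    (ha : a ∈ Set.center A) (hu : ¬IsUnit a) :
    ∃ m : Submodule A A, IsCoatom m ∧ ∀ x : A ⧸ m, a • x = 0 := by
  have hspan : Submodule.span A {a} ≠ ⊤ := by
    intro htop
    obtain ⟨r, hr⟩ := Submodule.mem_span_singleton.mp (Submodule.eq_top_iff'.mp htop 1)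
    rw [smul_eq_mul] at hr
    exact hu ⟨⟨a, r, (Semigroup.mem_center_iff.mp ha r).symm.trans hr, hr⟩, rfl⟩
  obtain ⟨m, hm, hle⟩ := Ideal.exists_le_maximal _ hspan
  refine ⟨m, Ideal.isMaximal_def.mp hm, fun x => ?_⟩
  induction x using Submodule.Quotient.induction_on with
  | H x =>
    rw [← Submodule.Quotient.mk_smul, Submodule.Quotient.mk_eq_zero, smul_eq_mul,
      ← Semigroup.mem_center_iff.mp ha x]
    exact hle (Submodule.smul_mem _ x (Submodule.mem_span_singleton_self a))

namespace MonoidAlgebra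

variable {G : Type*} [Group G]

noncomputable def finsetSum (k : Type*) [Semiring k] (H : Finset G) : k[G] :=
  ∑ h ∈ H, single h 1

variable {k : Type*}

theorem finsetSum_mem_center [CommSemiring k] {H : Finset G}
    (h_conj : ∀ g : G, ∀ h ∈ H, g * h * g⁻¹ ∈ H) : finsetSum k H ∈ Set.center k[G] := by
  rw [Semigroup.mem_center_iff]
  intro x
  induction x using MonoidAlgebra.induction_on with
  | of g =>
    simp only [of_apply, finsetSum, Finset.mul_sum, Finset.sum_mul, single_mul_single, one_mul]
    exact Finset.sum_nbij' (fun h => g * h * g⁻¹) (fun h => g⁻¹ * h * g)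
      (fun h hh => h_conj g h hh) (fun h hh => by simpa using h_conj g⁻¹ h hh)
      (fun h _ => by group) (fun h _ => by group) (fun h _ => by group)
  | add x y hx hy => rw [add_mul, mul_add, hx, hy]
  | smul r x hx => rw [smul_mul_assoc, mul_smul_comm, hx]

theorem det_cayley_eq_norm_finsetSum [CommRing k] [Fintype G] [DecidableEq G] (H : Finset G) :
    (Matrix.of fun u v : G => if v * u⁻¹ ∈ H then (1 : k) else 0).det =
      Algebra.norm k (finsetSum k H) := by
  rw [Algebra.norm_eq_matrix_det (MonoidAlgebra.basis G k), ← Matrix.det_transpose]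
  congr 1
  ext u v
  rw [Matrix.transpose_apply, Algebra.leftMulMatrix_eq_repr_mul, MonoidAlgebra.basis_apply]
  change _ = (finsetSum k H * single v 1).coeff u
  simp only [finsetSum, Finset.sum_mul, single_mul_single, one_mul, coeff_sum, coeff_single,
    Finsupp.single_apply, Finset.sum_apply', ← eq_mul_inv_iff_mul_eq, Finset.sum_ite_eq',
    Matrix.of_apply]

end MonoidAlgebra

namespace Representation

theorem asAlgebraHom_ofModule' {k G : Type*} [CommSemiring k] [Monoid G] (M : Type*)
    [AddCommMonoid M] [Module k M] [Module k[G] M] [IsScalarTower k k[G] M] (r : k[G]) (x : M) :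
    asAlgebraHom (ofModule' M) r x = r • x := by
  rw [ofModule', asAlgebraHom_def, (MonoidAlgebra.lift k _ G).apply_symm_apply]
  rfl

variable {k G : Type*} [Field k] [Monoid G]

theorem isIrreducible_ofModule' (M : Type*) [AddCommGroup M] [Module k M] [Module k[G] M]
    [IsScalarTower k k[G] M] [IsSimpleModule k[G] M] :
    IsIrreducible (ofModule' (k := k) (G := G) M) := by
  rw [irreducible_iff_isSimpleModule_asModule]
  exact IsSimpleModule.congr
    { (ofModule' M).asModuleEquiv with
      map_smul' := fun r x => by
        simp [asModuleEquiv_map_smul, asAlgebraHom_ofModule'] }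

end Representation

namespace FDRep

universe u
variable {k G : Type u} [Field k] [Group G]

theorem simple_of_isIrreducible [IsAlgClosed k] [Finite G] [NeZero (Nat.card G : k)]
    {V : Type u} [AddCommGroup V] [Module k V] [FiniteDimensional k V]
    (ρ : Representation k G V) [ρ.IsIrreducible] : Simple (FDRep.of ρ) := by
  rw [simple_iff_end_is_rank_one, ← (forget₂HomLinearEquiv _ _).finrank_eq,
    (Rep.homLinearEquiv _ _).finrank_eq]
  exact Representation.IsIrreducible.finrank_intertwiningMap_self ρ

theorem nontrivial_of_simple (V : FDRep k G) [Simple V] : Nontrivial V := by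
  rw [← not_subsingleton_iff_nontrivial]
  intro h
  apply id_nonzero V
  ext v
  exact Subsingleton.elim _ _

theorem sum_character_eq_trace (V : FDRep k G) (H : Finset G) :
    ∑ h ∈ H, V.character h =
      LinearMap.trace k V (Representation.asAlgebraHom V.ρ (MonoidAlgebra.finsetSum k H)) := by
  simp only [MonoidAlgebra.finsetSum, map_sum, Representation.asAlgebraHom_single_one]
  rfl

theorem exists_asAlgebraHom_eq_smul_one [IsAlgClosed k] (V : FDRep k G) [Simple V] {a : k[G]}
    (ha : a ∈ Set.center k[G]) : ∃ c : k, Representation.asAlgebraHom V.ρ a = c • 1 := by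
  let f : V ⟶ V := ⟨ConcreteCategory.ofHom (Representation.asAlgebraHom V.ρ a), fun g => by
    ext v
    change Representation.asAlgebraHom V.ρ a (V.ρ g v) = V.ρ g (Representation.asAlgebraHom V.ρ a v)
    rw [← Representation.asAlgebraHom_single_one, ← Module.End.mul_apply, ← Module.End.mul_apply,
      ← map_mul, ← map_mul, Semigroup.mem_center_iff.mp ha]⟩
  obtain ⟨c, hc⟩ := endomorphism_simple_eq_smul_id k f
  exact ⟨c, (congrArg (fun φ : V ⟶ V => φ.hom.hom.hom) hc).symm⟩

theorem asAlgebraHom_eq_zero_iff_trace_eq_zero [IsAlgClosed k] [CharZero k] (V : FDRep k G)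
    [Simple V] {a : k[G]} (ha : a ∈ Set.center k[G]) :
    Representation.asAlgebraHom V.ρ a = 0 ↔
      LinearMap.trace k V (Representation.asAlgebraHom V.ρ a) = 0 := by
  have := V.nontrivial_of_simple
  obtain ⟨c, hc⟩ := V.exists_asAlgebraHom_eq_smul_one ha
  simp [hc, Module.finrank_pos.ne']

theorem exists_simple_asAlgebraHom_eq_zero_iff [IsAlgClosed k] [Finite G]
    [NeZero (Nat.card G : k)] {a : k[G]} (ha : a ∈ Set.center k[G]) :
    (∃ V : FDRep k G, Simple V ∧ Representation.asAlgebraHom V.ρ a = 0) ↔ ¬IsUnit a := by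
  constructor
  · rintro ⟨V, hV, h0⟩ hu
    have := V.nontrivial_of_simple
    exact (hu.map (Representation.asAlgebraHom V.ρ)).ne_zero h0
  · intro hu
    obtain ⟨m, hm, hann⟩ := Submodule.exists_isCoatom_smul_quotient_eq_zero ha hu
    have : IsSimpleModule k[G] (k[G] ⧸ m) := isSimpleModule_iff_isCoatom.mpr hm
    have : FiniteDimensional k (k[G] ⧸ m) := Module.Finite.trans k[G] _
    have := Representation.isIrreducible_ofModule' (k := k) (G := G) (k[G] ⧸ m)
    refine ⟨FDRep.of (Representation.ofModule' (k[G] ⧸ m)), simple_of_isIrreducible _, ?_⟩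
    ext x
    simp [Representation.asAlgebraHom_ofModule', hann]

end FDRep

theorem cayley_singular_iff_char_sum_zero_general {G : Type} [Group G] [Fintype G] [DecidableEq G]
    (H : Finset G)
    (h_conj : ∀ g : G, ∀ h ∈ H, g * h * g⁻¹ ∈ H) :
    (Matrix.of fun u v : G => if v * u⁻¹ ∈ H then (1 : ℂ) else 0).det = 0 ↔
      ∃ V : FDRep ℂ G, Simple V ∧ ∑ h ∈ H, V.character h = 0 := by
  have hcenter := MonoidAlgebra.finsetSum_mem_center (k := ℂ) h_conj
  rw [MonoidAlgebra.det_cayley_eq_norm_finsetSum, ← not_ne_iff, ← isUnit_iff_ne_zero,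
    Algebra.isUnit_norm_iff, ← FDRep.exists_simple_asAlgebraHom_eq_zero_iff hcenter]
  refine exists_congr fun V => and_congr_right fun hV => ?_
  rw [FDRep.sum_character_eq_trace, FDRep.asAlgebraHom_eq_zero_iff_trace_eq_zero V hcenter]

/-- Theorem 1.1: For a finite group `G` and a `G`-invariant connecting-type set `H`
(no identity, closed under inverses, closed under conjugation), the Cayley graph
`Cay(G,H)` is singular iff some irreducible complex character `χ` of `G` satisfies
`∑ h ∈ H, χ h = 0`. -/
theorem cayley_singular_iff_char_sum_zero {G : Type} [Group G] [Fintype G] [DecidableEq G]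
    (H : Finset G) (h_one : (1 : G) ∉ H)
    (h_inv : ∀ h ∈ H, h⁻¹ ∈ H)
    (h_conj : ∀ g : G, ∀ h ∈ H, g * h * g⁻¹ ∈ H) :
    (Matrix.of fun u v : G => if v * u⁻¹ ∈ H then (1 : ℂ) else 0).det = 0 ↔
      ∃ V : FDRep ℂ G, Simple V ∧ ∑ h ∈ H, V.character h = 0 :=
  cayley_singular_iff_char_sum_zero_general H h_conj
end

section
/- An element g ∈ A_n (n ≥ 1) is conjugate in A_n to its inverse g⁻¹ if and only if one of the following holds: (1) some cycle of g has even length; (2) g has two cycles of equal odd length (fixed points count as cycles of length 1); or (3) all cycles of g have pairwise distinct odd lengths c₁,…,c_k and ∑ᵢ (cᵢ−1)/2 is even. -/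
/-!
The reversal `i ↦ m - 1 - i` of `Fin m` conjugates the rotation `i ↦ i + 1` to its inverse and
is a product of `⌊m/2⌋` transpositions. Transporting it to every cycle of `g` conjugates `g` to
`g⁻¹` in `Sₙ` by a permutation `σ` of sign `(-1) ^ ∑ ⌊cᵢ/2⌋`, and `⌊cᵢ/2⌋ = (cᵢ - 1)/2` for odd
`cᵢ`. The conjugators from `g` to `g⁻¹` form the coset `σ · C(g)` of the centralizer, so `g` is
real in `Aₙ` iff `σ` is even or `C(g)` contains an odd permutation; by
`Equiv.Perm.centralizer_le_alternating_iff` the latter fails exactly when the cycles of `g` have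
pairwise distinct odd lengths and `g` has at most one fixed point.
-/

open Equiv Equiv.Perm Finset

namespace Fin

theorem revPerm_succ (n : ℕ) :
    (revPerm : Perm (Fin (n + 1))) =
      finRotate (n + 1) * (revPerm : Perm (Fin n)).viaFintypeEmbedding castSuccEmb := by
  ext i
  induction i using lastCases with
  | last =>
    rw [Perm.mul_apply, viaFintypeEmbedding_apply_notMem_range _ _ (by simp)]
    simp
  | cast i =>
    rw [Perm.mul_apply, ← coe_castSuccEmb, viaFintypeEmbedding_apply_image]
    simp only [coe_castSuccEmb, revPerm_apply, val_rev, val_castSucc, Nat.reduceSubDiff,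
      finRotate_apply, coeSucc_eq_succ, val_succ]
    omega

theorem sign_revPerm (n : ℕ) : sign (revPerm : Perm (Fin n)) = (-1) ^ (n / 2) := by
  induction n with
  | zero => rfl
  | succ n ih =>
    rw [revPerm_succ, map_mul, viaFintypeEmbedding_sign, ih, sign_finRotate, ← pow_add,
      Nat.add_sub_cancel, Int.units_pow_eq_pow_mod_two,
      Int.units_pow_eq_pow_mod_two _ ((n + 1) / 2)]
    obtain ⟨k, rfl | rfl⟩ := Nat.even_or_odd' n
    all_goals (congr 1; omega)

theorem revPerm_mul_finRotate_mul_revPerm (n : ℕ) :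
    revPerm * finRotate n * revPerm⁻¹ = (finRotate n)⁻¹ := by
  rw [Perm.inv_def, revPerm_symm, eq_inv_iff_mul_eq_one]
  ext i : 1
  cases n with
  | zero => exact i.elim0
  | succ n => simp [rev_add]

end Fin

namespace Equiv.Perm

variable {α : Type*} [Fintype α] [DecidableEq α]

def IsReversal (σ g : Perm α) : Prop :=
  σ.support ⊆ g.support ∧ σ * g * σ⁻¹ = g⁻¹

theorem IsReversal.conj {σ g : Perm α} (h : IsReversal σ g) (π : Perm α) :
    IsReversal (π * σ * π⁻¹) (π * g * π⁻¹) := by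
  refine ⟨?_, ?_⟩
  · rw [support_conj, support_conj]
    exact map_subset_map.2 h.1
  · calc π * σ * π⁻¹ * (π * g * π⁻¹) * (π * σ * π⁻¹)⁻¹ = π * (σ * g * σ⁻¹) * π⁻¹ := by group
      _ = (π * g * π⁻¹)⁻¹ := by rw [h.2]; group

theorem IsReversal.mul {σ τ g h : Perm α} (hσ : IsReversal σ g) (hτ : IsReversal τ h)
    (hgh : Disjoint g h) : IsReversal (σ * τ) (g * h) := by
  have hσh : Commute σ h⁻¹ := (hgh.mono hσ.1 (support_inv h).le).commute
  have hτg : Commute τ g := (hgh.symm.mono hτ.1 le_rfl).commute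
  refine ⟨(support_mul_le σ τ).trans ?_, ?_⟩
  · rw [hgh.support_mul]
    exact sup_le_sup hσ.1 hτ.1
  · calc σ * τ * (g * h) * (σ * τ)⁻¹
          = σ * (τ * g * τ⁻¹) * σ⁻¹ * (σ * (τ * h * τ⁻¹) * σ⁻¹) := by group
      _ = (σ * g * σ⁻¹) * (σ * h⁻¹ * σ⁻¹) := by rw [hτg.mul_inv_cancel, hτ.2]
      _ = g⁻¹ * h⁻¹ := by rw [hσ.2, hσh.mul_inv_cancel]
      _ = (g * h)⁻¹ := by rw [hgh.commute.eq, mul_inv_rev]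

theorem isReversal_revPerm_extendDomain {n : ℕ} (hn : 2 ≤ n) {p : α → Prop} [DecidablePred p]
    (f : Fin n ≃ Subtype p) :
    IsReversal (Fin.revPerm.extendDomain f) ((finRotate n).extendDomain f) := by
  refine ⟨?_, ?_⟩
  · rw [support_extend_domain, support_extend_domain, support_finRotate_of_le hn]
    exact map_subset_map.2 (subset_univ _)
  · rw [extendDomain_inv, extendDomain_inv, extendDomain_mul, extendDomain_mul,
      Fin.revPerm_mul_finRotate_mul_revPerm]

theorem exists_isReversal_sign_eq (g : Perm α) :
    ∃ σ, IsReversal σ g ∧ sign σ = (-1) ^ (g.cycleType.map (· / 2)).sum := by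
  induction g using cycle_induction_on with
  | base_one => exact ⟨1, by simp [IsReversal], by simp⟩
  | base_cycles c hc =>
    have hm := hc.two_le_card_support
    let f : Fin #c.support ≃ c.support := c.support.equivFin.symm
    obtain ⟨π, hπ⟩ := isConj_iff.1 <| ((isCycle_finRotate_of_le hm).extendDomain f).isConj hc <| by
      simp [support_finRotate_of_le hm]
    refine ⟨_, hπ ▸ (isReversal_revPerm_extendDomain hm f).conj π, ?_⟩
    rw [map_mul, map_mul, map_inv, mul_inv_cancel_comm, sign_extendDomain, Fin.sign_revPerm,
      hc.cycleType, Multiset.map_singleton, Multiset.sum_singleton]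
  | induction_disjoint g h hgh _ hg hh =>
    obtain ⟨σ, hσ, hσs⟩ := hg
    obtain ⟨τ, hτ, hτs⟩ := hh
    refine ⟨σ * τ, hσ.mul hτ hgh, ?_⟩
    rw [map_mul, hσs, hτs, hgh.cycleType_mul, Multiset.map_add, Multiset.sum_add, pow_add]

theorem isConj_alternatingGroup_iff_of_conj {g h : alternatingGroup α} {σ₀ : Perm α}
    (h₀ : σ₀ * g * σ₀⁻¹ = h) :
    IsConj g h ↔
      σ₀ ∈ alternatingGroup α ∨ ¬ Subgroup.centralizer {(g : Perm α)} ≤ alternatingGroup α := by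
  rw [isConj_iff]
  constructor
  · rintro ⟨⟨σ, hσ⟩, hσh⟩
    refine or_iff_not_imp_right.2 fun hcent => ?_
    have hcomm : σ₀⁻¹ * σ ∈ Subgroup.centralizer {(g : Perm α)} := by
      rw [Subgroup.mem_centralizer_singleton_iff]
      have hconj : σ * g * σ⁻¹ = σ₀ * g * σ₀⁻¹ := by rw [h₀, ← hσh]; rfl
      calc σ₀⁻¹ * σ * g = σ₀⁻¹ * (σ * g * σ⁻¹) * σ := by group
        _ = σ₀⁻¹ * (σ₀ * g * σ₀⁻¹) * σ := by rw [hconj]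
        _ = g * (σ₀⁻¹ * σ) := by group
    have hsign := not_not.1 hcent hcomm
    rw [mem_alternatingGroup] at hσ hsign ⊢
    rwa [map_mul, map_inv, hσ, mul_one, inv_eq_one] at hsign
  · intro hcases
    obtain ⟨σ, hσ, hσh⟩ : ∃ σ ∈ alternatingGroup α, σ * g * σ⁻¹ = h := by
      by_cases h₁ : σ₀ ∈ alternatingGroup α
      · exact ⟨σ₀, h₁, h₀⟩
      obtain ⟨τ, hτ, hτk⟩ := SetLike.not_le_iff_exists.1 (hcases.resolve_left h₁)
      rw [Subgroup.mem_centralizer_singleton_iff] at hτ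
      refine ⟨σ₀ * τ, ?_, ?_⟩
      · rw [mem_alternatingGroup] at h₁ hτk
        rw [mem_alternatingGroup, map_mul, Int.units_ne_iff_eq_neg.1 h₁,
          Int.units_ne_iff_eq_neg.1 hτk, neg_one_mul, neg_neg]
      · calc σ₀ * τ * g * (σ₀ * τ)⁻¹ = σ₀ * (τ * g) * τ⁻¹ * σ₀⁻¹ := by group
          _ = h := by rw [hτ, ← mul_assoc, mul_inv_cancel_right, h₀]
    exact ⟨⟨σ, hσ⟩, Subtype.ext hσh⟩

end Equiv.Perm

namespace Multiset

theorem sum_map_div_two_eq_of_forall_odd {s : Multiset ℕ} (hs : ∀ c ∈ s, Odd c) :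
    (s.map (· / 2)).sum = (s.map fun c => (c - 1) / 2).sum := by
  refine congrArg _ (map_congr rfl fun c hc => ?_)
  obtain ⟨k, rfl⟩ := hs c hc
  omega

theorem exists_odd_two_le_count_iff_not_nodup {s : Multiset ℕ} (hs : ∀ c ∈ s, Odd c) :
    (∃ c, Odd c ∧ 2 ≤ s.count c) ↔ ¬ s.Nodup := by
  simp only [nodup_iff_count_le_one, not_forall, not_le]
  refine ⟨fun ⟨c, _, hc⟩ => ⟨c, hc⟩, fun ⟨c, hc⟩ => ⟨c, hs c (count_pos.1 (by omega)), hc⟩⟩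

end Multiset

theorem real_in_alternatingGroup_iff_general (n : ℕ)
    (g : alternatingGroup (Fin n)) :
    IsConj g g⁻¹ ↔
      ((∃ c ∈ (g : Perm (Fin n)).cycleType, Even c) ∨
       ((∃ c, Odd c ∧ 2 ≤ ((g : Perm (Fin n)).cycleType.count c)) ∨
          2 ≤ n - ((g : Perm (Fin n)).cycleType.sum)) ∨
       ((g : Perm (Fin n)).cycleType.Nodup ∧
        (∀ c ∈ (g : Perm (Fin n)).cycleType, Odd c) ∧
        n - ((g : Perm (Fin n)).cycleType.sum) ≤ 1 ∧
        Even (((g : Perm (Fin n)).cycleType.map fun c => (c - 1) / 2).sum))) := by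
  obtain ⟨σ, hσ, hσ_sign⟩ := exists_isReversal_sign_eq (g : Perm (Fin n))
  rw [isConj_alternatingGroup_iff_of_conj (h := g⁻¹) hσ.2, mem_alternatingGroup, hσ_sign,
    centralizer_le_alternating_iff, Fintype.card_fin, ← Multiset.nodup_iff_count_le_one]
  set s := (g : Perm (Fin n)).cycleType
  by_cases hodd : ∀ c ∈ s, Odd c
  · rw [Multiset.sum_map_div_two_eq_of_forall_odd hodd, neg_one_pow_eq_one_iff_even (by decide),
      Multiset.exists_odd_two_le_count_iff_not_nodup hodd]
    grind
  · have heven : ∃ c ∈ s, Even c := by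
      push Not at hodd
      simpa only [Nat.not_odd_iff_even] using hodd
    grind

/-- Lemma 3.6: an element `g ∈ A_n` is real in `A_n` (conjugate in `A_n` to `g⁻¹`)
iff (1) `g` has a cycle of even length, or (2) `g` has two cycles of equal odd length
(counting fixed points as 1-cycles), or (3) all cycles of `g` (including fixed points)
have pairwise distinct odd lengths `cᵢ` and `∑ (cᵢ - 1)/2` is even.
Here `cycleType` lists the cycle lengths `≥ 2`, and `n - (cycleType).sum` is the
number of fixed points (the 1-cycles). -/
theorem real_in_alternatingGroup_iff (n : ℕ) (hn : 1 ≤ n)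
    (g : alternatingGroup (Fin n)) :
    IsConj g g⁻¹ ↔
      ((∃ c ∈ (g : Perm (Fin n)).cycleType, Even c) ∨
       ((∃ c, Odd c ∧ 2 ≤ ((g : Perm (Fin n)).cycleType.count c)) ∨
          2 ≤ n - ((g : Perm (Fin n)).cycleType.sum)) ∨
       ((g : Perm (Fin n)).cycleType.Nodup ∧
        (∀ c ∈ (g : Perm (Fin n)).cycleType, Odd c) ∧
        n - ((g : Perm (Fin n)).cycleType.sum) ≤ 1 ∧
        Even (((g : Perm (Fin n)).cycleType.map fun c => (c - 1) / 2).sum))) :=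
  real_in_alternatingGroup_iff_general n g
end

section
/- Let g ∈ S_n and write g = g_p · h = h · g_p where g_p, h ∈ ⟨g⟩, g_p is a p-element and the order of h is coprime to p. Then |supp(g_p)| equals the sum of those cycle lengths of g that are divisible by p. -/
/-!
Write `gp = g ^ m`. A point on a cycle of `g` of length `c` is moved by `g ^ m` exactly when
`c ∤ m`, so `|supp (g ^ m)|` is the sum of the cycle lengths of `g` not dividing `m`. Every cycle
length divides the order `N` of `g`, and for a divisor `c` of `N`, `c ∣ m ↔ p ∤ c`: the order
`N / gcd(N, m)` of `g ^ m` is a power of `p`, while `h = g ^ m'` with `m + m' ≡ 1 [MOD N]` has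
order prime to `p`, so `p` cannot divide both `m` and `m'` once it divides `N`.
-/

open Equiv Finset

namespace Equiv.Perm

variable {α : Type*} [Fintype α] [DecidableEq α]

theorem pow_apply_eq_self_iff_card_support_cycleOf_dvd {g : Perm α} {x : α}
    (hx : x ∈ g.support) (m : ℕ) : (g ^ m) x = x ↔ #(g.cycleOf x).support ∣ m := by
  have hgx : g x ≠ x := mem_support.1 hx
  have hcycle : (g.cycleOf x).IsCycle := g.isCycle_cycleOf hgx
  rw [← cycleOf_pow_apply_self, ← hcycle.pow_eq_one_iff' (by rwa [cycleOf_apply_self]),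
    ← orderOf_dvd_iff_pow_eq_one, hcycle.orderOf]

theorem mem_support_pow_iff {g : Perm α} {x : α} {m : ℕ} :
    x ∈ (g ^ m).support ↔ x ∈ g.support ∧ ¬ #(g.cycleOf x).support ∣ m := by
  by_cases hx : x ∈ g.support
  · rw [mem_support, Ne, pow_apply_eq_self_iff_card_support_cycleOf_dvd hx]
    exact ⟨fun h => ⟨hx, h⟩, And.right⟩
  · exact iff_of_false (fun h => hx (support_pow_le g m h)) (fun h => hx h.1)

theorem support_pow_eq_biUnion (g : Perm α) (m : ℕ) :
    (g ^ m).support = {σ ∈ g.cycleFactorsFinset | ¬ #σ.support ∣ m}.biUnion support := by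
  ext x
  simp only [mem_support_pow_iff, mem_biUnion, mem_filter]
  constructor
  · rintro ⟨hx, hdvd⟩
    exact ⟨g.cycleOf x, ⟨cycleOf_mem_cycleFactorsFinset_iff.2 hx, hdvd⟩,
      mem_support_cycleOf_iff.2 ⟨SameCycle.refl g x, hx⟩⟩
  · rintro ⟨σ, ⟨hσ, hdvd⟩, hxσ⟩
    rw [← cycle_is_cycleOf hxσ hσ]
    exact ⟨mem_cycleFactorsFinset_support_le hσ hxσ, hdvd⟩

theorem card_support_pow (g : Perm α) (m : ℕ) :
    #(g ^ m).support = (g.cycleType.filter fun c => ¬ c ∣ m).sum := by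
  rw [support_pow_eq_biUnion, card_biUnion]
  · rw [cycleType_def, Multiset.filter_map]
    rfl
  · intro σ hσ τ hτ hστ
    exact (g.cycleFactorsFinset_pairwise_disjoint (mem_filter.1 hσ).1 (mem_filter.1 hτ).1
      hστ).disjoint_support

end Equiv.Perm

theorem IsOfFinOrder.dvd_iff_not_dvd_of_eq_pow_mul_pow {G : Type*} [Monoid G] {g : G}
    (hg : IsOfFinOrder g) {p k m m' c : ℕ} (hp : p.Prime) (hm : orderOf (g ^ m) = p ^ k)
    (hm' : ¬ p ∣ orderOf (g ^ m')) (hmul : g = g ^ m * g ^ m') (hc : c ∣ orderOf g) :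
    c ∣ m ↔ ¬ p ∣ c := by
  have hsplit (j : ℕ) : orderOf g = orderOf (g ^ j) * (orderOf g).gcd j := by
    rw [hg.orderOf_pow, Nat.div_mul_cancel (Nat.gcd_dvd_left _ _)]
  constructor
  · intro hcm hpc
    have hpN : p ∣ orderOf g := hpc.trans hc
    have hpm' : p ∣ m' :=
      ((hp.dvd_mul.1 (hsplit m' ▸ hpN)).resolve_left hm').trans (Nat.gcd_dvd_right _ _)
    have hsum : m + m' ≡ 1 [MOD orderOf g] :=
      hg.pow_eq_pow_iff_modEq.1 (by rw [pow_add, pow_one, ← hmul])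
    exact hp.not_dvd_one ((hsum.dvd_iff hpN).1 (dvd_add (hpc.trans hcm) hpm'))
  · intro hpc
    have hcop : c.Coprime (p ^ k) := ((hp.coprime_iff_not_dvd.2 hpc).symm).pow_right k
    have hc' : c ∣ p ^ k * (orderOf g).gcd m := by rwa [← hm, ← hsplit]
    exact (hcop.dvd_of_dvd_mul_left hc').trans (Nat.gcd_dvd_right _ _)

/-- If `g = g_p · h = h · g_p` with `g_p, h ∈ ⟨g⟩`, `g_p` a `p`-element and `|h|`
coprime to `p`, then `|supp(g_p)|` equals the sum of the cycle lengths of `g`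
divisible by `p`. -/
theorem support_card_p_part (n : ℕ) (p : ℕ) (hp : p.Prime)
    (g gp h : Perm (Fin n))
    (hgp : gp ∈ Subgroup.zpowers g) (hh : h ∈ Subgroup.zpowers g)
    (hmul : g = gp * h)
    (hppow : ∃ k : ℕ, orderOf gp = p ^ k)
    (hcop : ¬ p ∣ orderOf h) :
    gp.support.card = (g.cycleType.filter fun c => p ∣ c).sum := by
  obtain ⟨k, hk⟩ := hppow
  obtain ⟨m, rfl⟩ := mem_powers_iff_mem_zpowers.2 hgp
  obtain ⟨m', rfl⟩ := mem_powers_iff_mem_zpowers.2 hh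
  rw [Perm.card_support_pow]
  congr 1
  refine Multiset.filter_congr fun c hc => ?_
  rw [(isOfFinOrder_of_finite g).dvd_iff_not_dvd_of_eq_pow_mul_pow hp hk hcop hmul
    (Perm.dvd_of_mem_cycleType hc), not_not]
end

section
/- Let n ≥ 4 and let g ∈ A_n have |supp(g)| ≤ n/2 − 1. Then there exists an element h ∈ A_n of order exactly 2·(order of g). -/
open Equiv

/-!
A permutation with cycle lengths `c₁, …, c_k` has order `lcm cᵢ`, and a permutation with cycle
lengths `2c₁, …, 2c_k` exists as soon as `2 |supp g| ≤ n`; its order is `2 lcm cᵢ`. Its sign is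
`(-1)^k`, so when `k` is odd a further disjoint transposition makes it even without changing the
order, which costs two more points. For `g = 1` the double transposition `(1 2)(3 4)` does the job.
-/

theorem Multiset.lcm_map_mul {α : Type*} [CommMonoidWithZero α] [StrongNormalizedGCDMonoid α]
    (a : α) {s : Multiset α} (hs : s ≠ 0) : (s.map (a * ·)).lcm = normalize a * s.lcm := by
  induction s using Multiset.induction_on with
  | empty => contradiction
  | cons b s ih =>
    rcases eq_or_ne s 0 with rfl | hs
    · simp
    · rw [map_cons, lcm_cons, lcm_cons, ih hs, ← lcm_mul_left]
      exact lcm_eq_of_associated_right ((normalize_associated a).mul_right _) _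

namespace Equiv.Perm

variable {α : Type*} [Fintype α] [DecidableEq α]

theorem exists_mem_alternatingGroup_orderOf_eq_lcm {M : Multiset ℕ}
    (hsum : M.sum ≤ Fintype.card α) (htwo : ∀ a ∈ M, 2 ≤ a) (heven : Even (M.sum + M.card)) :
    ∃ h ∈ alternatingGroup α, orderOf h = M.lcm := by
  obtain ⟨h, rfl⟩ := (exists_with_cycleType_iff α).mpr ⟨hsum, htwo⟩
  refine ⟨h, ?_, (lcm_cycleType h).symm⟩
  rw [mem_alternatingGroup, sign_of_cycleType, heven.neg_one_pow]

theorem exists_mem_alternatingGroup_orderOf_eq_two (hα : 4 ≤ Fintype.card α) :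
    ∃ h ∈ alternatingGroup α, orderOf h = 2 := by
  simpa using exists_mem_alternatingGroup_orderOf_eq_lcm (α := α) (M := {2, 2})
    (by simpa using hα) (by simp) (by decide)

theorem exists_mem_alternatingGroup_orderOf_eq_two_mul {σ : Perm α} (hσ : σ ≠ 1)
    (hsupp : 2 * σ.support.card + 2 ≤ Fintype.card α) :
    ∃ h ∈ alternatingGroup α, orderOf h = 2 * orderOf σ := by
  set D := σ.cycleType.map (2 * ·)
  have hD_sum : D.sum = 2 * σ.support.card := by
    rw [Multiset.sum_map_mul_left, Multiset.map_id', sum_cycleType]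
  have hD_two : ∀ a ∈ D, 2 ≤ a := by
    simp only [D, Multiset.mem_map]
    rintro _ ⟨c, hc, rfl⟩
    have := two_le_of_mem_cycleType hc
    omega
  have hD_lcm : D.lcm = 2 * orderOf σ := by
    rw [Multiset.lcm_map_mul _ (cycleType_eq_zero.not.mpr hσ), lcm_cycleType, normalize_eq]
  rcases Nat.even_or_odd σ.cycleType.card with hk | hk
  · refine hD_lcm ▸ exists_mem_alternatingGroup_orderOf_eq_lcm (by omega) hD_two ?_
    rw [hD_sum, Multiset.card_map]
    exact (even_two_mul _).add hk
  · have hlcm : (2 ::ₘ D).lcm = 2 * orderOf σ := by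
      rw [Multiset.lcm_cons, hD_lcm]
      exact lcm_eq_right_iff _ _ (normalize_eq _) |>.mpr (dvd_mul_right 2 _)
    refine hlcm ▸ exists_mem_alternatingGroup_orderOf_eq_lcm ?_ ?_ ?_
    · rw [Multiset.sum_cons]
      omega
    · simpa using hD_two
    · rw [Multiset.sum_cons, Multiset.card_cons, hD_sum, Multiset.card_map]
      obtain ⟨j, hj⟩ := hk
      exact ⟨σ.support.card + j + 2, by omega⟩

end Equiv.Perm

/-- Lemma 6.6(1) (contrapositive form): if `n ≥ 4` and `g ∈ A_n` satisfies
`|supp(g)| ≤ n/2 - 1`, then `A_n` contains an element of order exactly `2|g|`. -/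
theorem exists_double_order_of_small_support (n : ℕ) (hn : 4 ≤ n)
    (g : alternatingGroup (Fin n))
    (hsupp : ((g : Perm (Fin n)).support.card : ℚ) ≤ (n : ℚ) / 2 - 1) :
    ∃ h : alternatingGroup (Fin n), orderOf h = 2 * orderOf g := by
  have hsupp' : 2 * (g : Perm (Fin n)).support.card + 2 ≤ n := by
    have : (2 * (g : Perm (Fin n)).support.card + 2 : ℚ) ≤ n := by linarith
    exact_mod_cast this
  rw [← Subgroup.orderOf_coe]
  rcases eq_or_ne (g : Perm (Fin n)) 1 with hg | hg
  · obtain ⟨h, hA, hh⟩ := Perm.exists_mem_alternatingGroup_orderOf_eq_two (α := Fin n) (by simpa)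
    exact ⟨⟨h, hA⟩, by rw [Subgroup.orderOf_mk, hh, hg, orderOf_one]⟩
  · obtain ⟨h, hA, hh⟩ := Perm.exists_mem_alternatingGroup_orderOf_eq_two_mul hg (by simpa)
    exact ⟨⟨h, hA⟩, by rw [Subgroup.orderOf_mk, hh]⟩
end

section
/- Let g ∈ A_n with g = g₂g₃ = g₃g₂ where g₂ has order 2^α and g₃ has order 3^β with α, β > 0. If n ≥ 2^{α+1} + |supp(g₃)| + 2, then A_n contains an element of order 2·|g|; and if n ≥ |supp(g₂)| + 3^{β+1}, then A_n contains an element of order 3·|g|. -/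
open Equiv

/-!
Since `g₂` and `g₃` commute and have coprime orders, `|g| = 2^α 3^β`. A `3^(β+1)`-cycle is even,
so multiplying `g₂` by one on points outside `supp(g₂)` stays in `A_n` and has order
`3^(β+1) 2^α = 3|g|`. A `2^(α+1)`-cycle is odd, so next to `g₃` it has to be paired with a
transposition on two further fresh points; the product still has order
`lcm(2, 2^(α+1), 3^β) = 2|g|`.
-/

namespace Equiv.Perm

variable {α : Type*} [Fintype α] [DecidableEq α]

theorem exists_isCycle_support_eq (s : Finset α) (hs : 2 ≤ s.card) :
    ∃ c : Perm α, c.IsCycle ∧ c.support = s := by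
  refine ⟨s.toList.formPerm, List.isCycle_formPerm s.nodup_toList (by simpa using hs), ?_⟩
  rw [List.support_formPerm_of_nodup _ s.nodup_toList, Finset.toList_toFinset]
  intro x hx
  apply_fun List.length at hx
  simp only [Finset.length_toList, List.length_cons, List.length_nil] at hx
  omega

theorem exists_isCycle_disjoint (σ : Perm α) {k : ℕ} (hk : 2 ≤ k)
    (hcard : σ.support.card + k ≤ Fintype.card α) :
    ∃ c : Perm α, c.IsCycle ∧ c.support.card = k ∧ c.Disjoint σ := by
  obtain ⟨s, hs, rfl⟩ := Finset.exists_subset_card_eq (s := σ.supportᶜ) (n := k)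
    (by rw [Finset.card_compl]; omega)
  obtain ⟨c, hc, rfl⟩ := exists_isCycle_support_eq s hk
  refine ⟨c, hc, rfl, disjoint_iff_disjoint_support.mpr ?_⟩
  exact Finset.disjoint_of_subset_left hs disjoint_compl_left

end Equiv.Perm

namespace alternatingGroup

open Perm

variable {α : Type*} [Fintype α] [DecidableEq α]

theorem exists_orderOf_eq_mul_of_odd (σ : alternatingGroup α) {k : ℕ} (hk : Odd k) (hk1 : 1 < k)
    (hcop : k.Coprime (orderOf σ))
    (hcard : (σ : Perm α).support.card + k ≤ Fintype.card α) :
    ∃ τ : alternatingGroup α, orderOf τ = k * orderOf σ := by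
  obtain ⟨c, hc, hck, hdisj⟩ := exists_isCycle_disjoint (σ : Perm α) hk1 hcard
  have hsign : sign c = 1 := by rw [hc.sign, hck, hk.neg_one_pow, neg_neg]
  refine ⟨⟨c * σ, mem_alternatingGroup.mpr (by simp [hsign, mem_alternatingGroup.mp σ.2])⟩, ?_⟩
  rw [Subgroup.orderOf_mk, hdisj.orderOf, hc.orderOf, hck, Subgroup.orderOf_coe,
    hcop.lcm_eq_mul]

theorem exists_orderOf_eq_mul_of_even (σ : alternatingGroup α) {k : ℕ} (hk : Even k) (hk0 : k ≠ 0)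
    (hcop : k.Coprime (orderOf σ))
    (hcard : (σ : Perm α).support.card + k + 2 ≤ Fintype.card α) :
    ∃ τ : alternatingGroup α, orderOf τ = k * orderOf σ := by
  have hk2 : 2 ≤ k := by obtain ⟨j, rfl⟩ := hk; omega
  obtain ⟨c, hc, hck, hdisj⟩ := exists_isCycle_disjoint (σ : Perm α) hk2 (by omega)
  obtain ⟨t, ht, htk, htdisj⟩ := exists_isCycle_disjoint (c * (σ : Perm α)) le_rfl
    (by rw [hdisj.card_support_mul]; omega)
  have hsign_c : sign c = -1 := by rw [hc.sign, hck, hk.neg_one_pow]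
  have hsign_t : sign t = -1 := by rw [ht.sign, htk]; norm_num
  refine ⟨⟨t * (c * (σ : Perm α)), mem_alternatingGroup.mpr
    (by simp [hsign_c, hsign_t, mem_alternatingGroup.mp σ.2])⟩, ?_⟩
  have hcσ : orderOf (c * σ) = k * orderOf σ := by
    rw [hdisj.orderOf, hc.orderOf, hck, Subgroup.orderOf_coe, hcop.lcm_eq_mul]
  rw [Subgroup.orderOf_mk, htdisj.orderOf, ht.orderOf, htk, hcσ,
    Nat.lcm_eq_right (Dvd.dvd.mul_right (even_iff_two_dvd.mp hk) _)]

end alternatingGroup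

theorem exists_larger_order_elements_general (n : ℕ) (α β : ℕ)
    (g g₂ g₃ : alternatingGroup (Fin n))
    (hmul : g = g₂ * g₃) (hcomm : g₂ * g₃ = g₃ * g₂)
    (ho2 : orderOf g₂ = 2 ^ α) (ho3 : orderOf g₃ = 3 ^ β) :
    ((2 ^ (α + 1) + ((g₃ : Perm (Fin n)).support.card) + 2 ≤ n →
        ∃ h : alternatingGroup (Fin n), orderOf h = 2 * orderOf g) ∧
     (((g₂ : Perm (Fin n)).support.card) + 3 ^ (β + 1) ≤ n →
        ∃ h : alternatingGroup (Fin n), orderOf h = 3 * orderOf g)) := by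
  have hcop : ∀ a b : ℕ, Nat.Coprime (2 ^ a) (3 ^ b) := fun a b => Nat.Coprime.pow _ _ (by norm_num)
  have hog : orderOf g = 2 ^ α * 3 ^ β := by
    rw [hmul, Commute.orderOf_mul_eq_mul_orderOf_of_coprime hcomm (ho2 ▸ ho3 ▸ hcop α β), ho2, ho3]
  constructor
  · intro hn
    obtain ⟨h, hh⟩ := alternatingGroup.exists_orderOf_eq_mul_of_even g₃ (k := 2 ^ (α + 1))
      ((Nat.even_pow' α.succ_ne_zero).mpr even_two) (by positivity) (ho3 ▸ hcop _ _)
      (by rw [Fintype.card_fin]; omega)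
    exact ⟨h, by rw [hh, ho3, hog, pow_succ]; ring⟩
  · intro hn
    obtain ⟨h, hh⟩ := alternatingGroup.exists_orderOf_eq_mul_of_odd g₂ (k := 3 ^ (β + 1))
      (Odd.pow (by decide)) (Nat.one_lt_pow β.succ_ne_zero (by norm_num))
      (ho2 ▸ (hcop _ _).symm) (by rw [Fintype.card_fin]; omega)
    exact ⟨h, by rw [hh, ho2, hog, pow_succ]; ring⟩

/-- Lemma 6.6(2): let `g = g₂g₃ = g₃g₂ ∈ A_n` with `|g₂| = 2^α`, `|g₃| = 3^β`,
`α, β > 0`. If `n ≥ 2^(α+1) + |supp(g₃)| + 2` then `A_n` has an element of order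
`2|g|`; and if `n ≥ |supp(g₂)| + 3^(β+1)` then `A_n` has an element of order `3|g|`. -/
theorem exists_larger_order_elements (n : ℕ) (α β : ℕ) (hα : 0 < α) (hβ : 0 < β)
    (g g₂ g₃ : alternatingGroup (Fin n))
    (hmul : g = g₂ * g₃) (hcomm : g₂ * g₃ = g₃ * g₂)
    (ho2 : orderOf g₂ = 2 ^ α) (ho3 : orderOf g₃ = 3 ^ β) :
    ((2 ^ (α + 1) + ((g₃ : Perm (Fin n)).support.card) + 2 ≤ n →
        ∃ h : alternatingGroup (Fin n), orderOf h = 2 * orderOf g) ∧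
     (((g₂ : Perm (Fin n)).support.card) + 3 ^ (β + 1) ≤ n →
        ∃ h : alternatingGroup (Fin n), orderOf h = 3 * orderOf g)) :=
  exists_larger_order_elements_general n α β g g₂ g₃ hmul hcomm ho2 ho3
end

section
/- Let g ∈ S_n (n ≥ 2) be an element of even order with the maximal possible support among elements of S_n of the same order; then |supp(g)| ≥ n − 1. If instead g ∈ A_n has even order and maximal support among elements of A_n of the same order, then |supp(g)| ≥ n − 3. If the order of g is a multiple of 3 and g has maximal support (in S_n or A_n), then |supp(g)| ≥ n − 2. -/
open Equiv Finset

/-!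
If `g` misses at least `m.sum` points, then a permutation `τ` of cycle type `m` can be placed on
the fixed points of `g`. When the orders of the cycles in `m` divide the order of `g`, the product
`g * τ` has the same order as `g` and strictly larger support, so `g` was not of maximal support.
A transposition, a double transposition and a 3-cycle give the three bounds; the latter two are
even, so the argument also runs inside `A_n`.
-/

namespace Equiv.Perm

theorem orderOf_mul_eq_left_of_disjoint {α : Type*} {g τ : Perm α} (hd : g.Disjoint τ)
    (hdvd : orderOf τ ∣ orderOf g) : orderOf (g * τ) = orderOf g := by
  rw [hd.orderOf, Nat.lcm_eq_left hdvd]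

variable {α : Type*} [Fintype α] [DecidableEq α]

def IsMaximalSupport (H : Subgroup (Perm α)) (g : Perm α) : Prop :=
  ∀ h ∈ H, orderOf h = orderOf g → #h.support ≤ #g.support

theorem exists_disjoint_cycleType (g : Perm α) {m : Multiset ℕ}
    (hm : m.sum ≤ #g.supportᶜ) (hm2 : ∀ a ∈ m, 2 ≤ a) :
    ∃ τ : Perm α, g.Disjoint τ ∧ τ.cycleType = m := by
  obtain ⟨u, hu⟩ := (exists_with_cycleType_iff (α := {x // x ∈ g.supportᶜ})).mpr
    ⟨by rwa [Fintype.card_coe], hm2⟩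
  refine ⟨ofSubtype u, ?_, by rw [cycleType_ofSubtype, hu]⟩
  rw [disjoint_iff_disjoint_support, support_ofSubtype]
  exact disjoint_left.mpr fun x hx hx' => by
    obtain ⟨y, -, rfl⟩ := mem_map.mp hx'
    exact mem_compl.mp y.2 hx

theorem Disjoint.card_support_lt_mul {g τ : Perm α} (hd : g.Disjoint τ) (hτ : τ ≠ 1) :
    #g.support < #(g * τ).support := by
  rw [hd.support_mul, card_union_of_disjoint (disjoint_iff_disjoint_support.mp hd)]
  have : #τ.support ≠ 0 := mt card_support_eq_zero.mp hτ
  omega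

theorem IsMaximalSupport.card_lt {H : Subgroup (Perm α)} {g : Perm α}
    (hmax : IsMaximalSupport H g) (hg : g ∈ H) {m : Multiset ℕ} (hm0 : m ≠ 0)
    (hm2 : ∀ a ∈ m, 2 ≤ a) (hdvd : m.lcm ∣ orderOf g)
    (hH : ∀ τ : Perm α, τ.cycleType = m → τ ∈ H) :
    Fintype.card α < #g.support + m.sum := by
  by_contra! hle
  have hcompl : m.sum ≤ #g.supportᶜ := by rw [card_compl]; omega
  obtain ⟨τ, hd, rfl⟩ := exists_disjoint_cycleType g hcompl hm2
  have hord : orderOf (g * τ) = orderOf g :=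
    orderOf_mul_eq_left_of_disjoint hd (lcm_cycleType τ ▸ hdvd)
  exact (hd.card_support_lt_mul (mt cycleType_eq_zero.mpr hm0)).not_ge
    (hmax _ (mul_mem hg (hH τ rfl)) hord)

theorem mem_alternatingGroup_of_cycleType_eq {τ : Perm α} {m : Multiset ℕ}
    (hτ : τ.cycleType = m) (hm : Even (m.sum + Multiset.card m)) :
    τ ∈ alternatingGroup α := by
  rw [mem_alternatingGroup, sign_of_cycleType, hτ, hm.neg_one_pow]

theorem isMaximalSupport_top_iff {g : Perm α} :
    IsMaximalSupport ⊤ g ↔ ∀ h : Perm α, orderOf h = orderOf g → #h.support ≤ #g.support := by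
  simp [IsMaximalSupport]

theorem isMaximalSupport_alternatingGroup_iff {g : alternatingGroup α} :
    IsMaximalSupport (alternatingGroup α) g ↔ ∀ h : alternatingGroup α, orderOf h = orderOf g →
      #(h : Perm α).support ≤ #(g : Perm α).support := by
  simp only [IsMaximalSupport, Subgroup.orderOf_coe, Subtype.forall, Subgroup.orderOf_mk]

end Equiv.Perm

open Equiv.Perm

theorem maximal_support_bounds_general (n : ℕ) :
    (∀ g : Perm (Fin n), Even (orderOf g) →
      (∀ h : Perm (Fin n), orderOf h = orderOf g → h.support.card ≤ g.support.card) →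
      n - 1 ≤ g.support.card) ∧
    (∀ g : alternatingGroup (Fin n), Even (orderOf g) →
      (∀ h : alternatingGroup (Fin n), orderOf h = orderOf g →
        (h : Perm (Fin n)).support.card ≤ (g : Perm (Fin n)).support.card) →
      n - 3 ≤ (g : Perm (Fin n)).support.card) ∧
    (∀ g : Perm (Fin n), 3 ∣ orderOf g →
      (∀ h : Perm (Fin n), orderOf h = orderOf g → h.support.card ≤ g.support.card) →
      n - 2 ≤ g.support.card) ∧
    (∀ g : alternatingGroup (Fin n), 3 ∣ orderOf g →
      (∀ h : alternatingGroup (Fin n), orderOf h = orderOf g →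
        (h : Perm (Fin n)).support.card ≤ (g : Perm (Fin n)).support.card) →
      n - 2 ≤ (g : Perm (Fin n)).support.card) := by
  refine ⟨fun g heven hmax => ?_, fun g heven hmax => ?_, fun g h3 hmax => ?_,
    fun g h3 hmax => ?_⟩
  · have := (isMaximalSupport_top_iff.mpr hmax).card_lt (Subgroup.mem_top g)
      (m := {2}) (by simp) (by simp) (by simpa using heven.two_dvd) fun _ _ => Subgroup.mem_top _
    simp only [Fintype.card_fin, Multiset.sum_singleton] at this
    omega
  · have := (isMaximalSupport_alternatingGroup_iff.mpr hmax).card_lt g.2 (m := {2, 2})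
      (by simp) (by simp) (by simpa [Subgroup.orderOf_coe] using heven.two_dvd)
      fun _ hτ => mem_alternatingGroup_of_cycleType_eq hτ (by decide)
    simp only [Fintype.card_fin] at this
    norm_num at this
    omega
  · have := (isMaximalSupport_top_iff.mpr hmax).card_lt (Subgroup.mem_top g)
      (m := {3}) (by simp) (by simp) (by simpa using h3) fun _ _ => Subgroup.mem_top _
    simp only [Fintype.card_fin, Multiset.sum_singleton] at this
    omega
  · have := (isMaximalSupport_alternatingGroup_iff.mpr hmax).card_lt g.2 (m := {3})
      (by simp) (by simp) (by simpa [Subgroup.orderOf_coe] using h3)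
      fun _ hτ => mem_alternatingGroup_of_cycleType_eq hτ (by decide)
    simp only [Fintype.card_fin, Multiset.sum_singleton] at this
    omega

/-- Lemma 6.1: lower bounds on the support of elements of maximal support.
An element `g` of `G = S_n` or `A_n` has maximal support if
`|supp(h)| ≤ |supp(g)|` for every `h ∈ G` of the same order. Then:
(1) in `S_n` (`n ≥ 2`), an element of even order and maximal support has
`|supp(g)| ≥ n - 1`;
(2) in `A_n`, an element of even order and maximal support has `|supp(g)| ≥ n - 3`;
(3) in `S_n` or `A_n`, an element of order divisible by 3 and maximal support has
`|supp(g)| ≥ n - 2`. -/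
theorem maximal_support_bounds (n : ℕ) (hn : 2 ≤ n) :
    (∀ g : Perm (Fin n), Even (orderOf g) →
      (∀ h : Perm (Fin n), orderOf h = orderOf g → h.support.card ≤ g.support.card) →
      n - 1 ≤ g.support.card) ∧
    (∀ g : alternatingGroup (Fin n), Even (orderOf g) →
      (∀ h : alternatingGroup (Fin n), orderOf h = orderOf g →
        (h : Perm (Fin n)).support.card ≤ (g : Perm (Fin n)).support.card) →
      n - 3 ≤ (g : Perm (Fin n)).support.card) ∧
    (∀ g : Perm (Fin n), 3 ∣ orderOf g →
      (∀ h : Perm (Fin n), orderOf h = orderOf g → h.support.card ≤ g.support.card) →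
      n - 2 ≤ g.support.card) ∧
    (∀ g : alternatingGroup (Fin n), 3 ∣ orderOf g →
      (∀ h : alternatingGroup (Fin n), orderOf h = orderOf g →
        (h : Perm (Fin n)).support.card ≤ (g : Perm (Fin n)).support.card) →
      n - 2 ≤ (g : Perm (Fin n)).support.card) :=
  maximal_support_bounds_general n
end
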